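/- arXiv:2209.03259 — 3 statements merged into one kernel-verified Lean document; each statement's English description precedes it below -/
import Mathlib

section
/- Suppose Z is a real n×k matrix such that the projection matrix P := Z(ZᵀZ)^{-1}Zᵀ has rank k, and there exists 0 < δ < 1 with max_{1≤i≤n} P_{ii} ≤ 1 − δ. Then there exists γ⁰ ≥ 0 such that ∑_{i=1}^n ∑_{j≠i} (P^{γ⁰}_{ij})² ≥ (δ/2)·k; consequently, the maximiser γ* of γ ↦ ∑_{i=1}^n ∑_{j≠i} (P^γ_{ij})² over γ ≥ 0 satisfies ∑_{i=1}^n ∑_{j≠i} (P^{γ*}_{ij})² ≥ (δ/2)·k, i.e. Assumption 3 holds with ω = 1 and c = δ/2. -/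
/-!
At `γ = 0` the ridge matrix is the orthogonal projection `P = Z(ZᵀZ)⁻¹Zᵀ`. Since `P` is
symmetric and idempotent, row `i` satisfies `∑ⱼ P_ij² = P_ii`, so its off-diagonal mass is
`P_ii (1 - P_ii) ≥ δ P_ii`. Summing over `i` and using `tr P = k` gives `δ k ≥ (δ/2) k`, and a
maximiser over `γ ≥ 0` does at least as well as `γ = 0`.
-/

open Matrix Finset

/-- The ridge-regularised projection matrix `P^γ = Z (ZᵀZ + γ I)⁻¹ Zᵀ`. -/
noncomputable def ridgeP {n k : ℕ} (Z : Matrix (Fin n) (Fin k) ℝ) (γ : ℝ) :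
    Matrix (Fin n) (Fin n) ℝ :=
  Z * (Zᵀ * Z + γ • (1 : Matrix (Fin k) (Fin k) ℝ))⁻¹ * Zᵀ

noncomputable def offDiagSqSum {ι R : Type*} [Fintype ι] [DecidableEq ι] [CommRing R]
    (P : Matrix ι ι R) : R :=
  ∑ i, ∑ j ∈ univ.erase i, P i j ^ 2

section SymmIdempotent

variable {ι R : Type*} [Fintype ι]

theorem sum_sq_row_eq_diag_of_symm_idempotent [CommRing R] {P : Matrix ι ι R}
    (hsymm : Pᵀ = P) (hidem : IsIdempotentElem P) (i : ι) :
    ∑ j, P i j ^ 2 = P i i := by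
  conv_rhs => rw [← hidem.eq]
  simp only [mul_apply, sq]
  refine sum_congr rfl fun j _ => ?_
  rw [← transpose_apply P i j, hsymm]

theorem diag_nonneg_of_symm_idempotent [CommRing R] [LinearOrder R] [IsStrictOrderedRing R]
    {P : Matrix ι ι R} (hsymm : Pᵀ = P) (hidem : IsIdempotentElem P) (i : ι) : 0 ≤ P i i := by
  rw [← sum_sq_row_eq_diag_of_symm_idempotent hsymm hidem]
  exact sum_nonneg fun j _ => sq_nonneg _

variable [DecidableEq ι]

theorem sum_erase_sq_row_eq_of_symm_idempotent [CommRing R] {P : Matrix ι ι R}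
    (hsymm : Pᵀ = P) (hidem : IsIdempotentElem P) (i : ι) :
    ∑ j ∈ univ.erase i, P i j ^ 2 = P i i - P i i ^ 2 := by
  rw [sum_erase_eq_sub (mem_univ i), sum_sq_row_eq_diag_of_symm_idempotent hsymm hidem]

theorem mul_trace_le_offDiagSqSum [CommRing R] [LinearOrder R] [IsStrictOrderedRing R]
    {P : Matrix ι ι R} (hsymm : Pᵀ = P) (hidem : IsIdempotentElem P) {δ : R}
    (hdiag : ∀ i, P i i ≤ 1 - δ) :
    δ * P.trace ≤ offDiagSqSum P := by
  rw [trace, mul_sum, offDiagSqSum]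
  refine sum_le_sum fun i _ => ?_
  rw [sum_erase_sq_row_eq_of_symm_idempotent hsymm hidem]
  have hnonneg := diag_nonneg_of_symm_idempotent hsymm hidem i
  have hle := hdiag i
  simp only [diag_apply]
  nlinarith

end SymmIdempotent

section HatMatrix

variable {m κ R : Type*} [Fintype m] [Fintype κ] [DecidableEq κ] [CommRing R]

theorem transpose_hat (Z : Matrix m κ R) :
    (Z * (Zᵀ * Z)⁻¹ * Zᵀ)ᵀ = Z * (Zᵀ * Z)⁻¹ * Zᵀ := by
  rw [transpose_mul, transpose_mul, transpose_nonsing_inv, transpose_mul, transpose_transpose,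
    Matrix.mul_assoc]

theorem isIdempotentElem_hat {Z : Matrix m κ R} (hinv : IsUnit (Zᵀ * Z).det) :
    IsIdempotentElem (Z * (Zᵀ * Z)⁻¹ * Zᵀ) := by
  calc Z * (Zᵀ * Z)⁻¹ * Zᵀ * (Z * (Zᵀ * Z)⁻¹ * Zᵀ)
      = Z * (((Zᵀ * Z)⁻¹ * (Zᵀ * Z)) * ((Zᵀ * Z)⁻¹ * Zᵀ)) := by simp only [Matrix.mul_assoc]
    _ = Z * (Zᵀ * Z)⁻¹ * Zᵀ := by rw [nonsing_inv_mul _ hinv, Matrix.one_mul, Matrix.mul_assoc]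

theorem trace_hat {Z : Matrix m κ R} (hinv : IsUnit (Zᵀ * Z).det) :
    (Z * (Zᵀ * Z)⁻¹ * Zᵀ).trace = Fintype.card κ := by
  rw [trace_mul_comm, ← Matrix.mul_assoc, mul_nonsing_inv _ hinv, trace_one]

end HatMatrix

theorem ridgeP_zero {n k : ℕ} (Z : Matrix (Fin n) (Fin k) ℝ) :
    ridgeP Z 0 = Z * (Zᵀ * Z)⁻¹ * Zᵀ := by
  simp [ridgeP]

theorem balanced_design_implies_assumption3_general
    {n k : ℕ}
    (Z : Matrix (Fin n) (Fin k) ℝ)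
    (hinv : IsUnit (Zᵀ * Z).det)
    (δ : ℝ) (hδ0 : 0 < δ)
    (hdiag : ∀ i : Fin n, (Z * (Zᵀ * Z)⁻¹ * Zᵀ) i i ≤ 1 - δ) :
    (∃ γ₀ : ℝ, 0 ≤ γ₀ ∧
      (δ / 2) * (k : ℝ) ≤
        ∑ i : Fin n, ∑ j ∈ Finset.univ.erase i, (ridgeP Z γ₀ i j) ^ 2) ∧
    (∀ γs : ℝ, 0 ≤ γs →
      (∀ γ : ℝ, 0 ≤ γ →
        (∑ i : Fin n, ∑ j ∈ Finset.univ.erase i, (ridgeP Z γ i j) ^ 2) ≤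
          ∑ i : Fin n, ∑ j ∈ Finset.univ.erase i, (ridgeP Z γs i j) ^ 2) →
      (δ / 2) * (k : ℝ) ≤
        ∑ i : Fin n, ∑ j ∈ Finset.univ.erase i, (ridgeP Z γs i j) ^ 2) := by
  have hmass : δ * k ≤ offDiagSqSum (ridgeP Z 0) := by
    simpa [ridgeP_zero, trace_hat hinv] using
      mul_trace_le_offDiagSqSum (transpose_hat Z) (isIdempotentElem_hat hinv) hdiag
  have hzero : (δ / 2) * (k : ℝ) ≤ offDiagSqSum (ridgeP Z 0) := by
    have : (δ / 2) * (k : ℝ) ≤ δ * k := by gcongr; linarith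
    exact this.trans hmass
  exact ⟨⟨0, le_rfl, hzero⟩, fun γs _ hmax => hzero.trans (hmax 0 le_rfl)⟩

/-- If the projection matrix `P = Z(ZᵀZ)⁻¹Zᵀ` has rank `k` and a balanced design
(`max_i P_ii ≤ 1 - δ` for some `0 < δ < 1`), then there is a ridge penalty `γ⁰ ≥ 0` whose
off-diagonal squared mass is at least `(δ/2)·k`; consequently any maximiser `γ*` of
`γ ↦ ∑_{i} ∑_{j ≠ i} (P^γ_{ij})²` over `γ ≥ 0` also achieves at least `(δ/2)·k`,
i.e. Assumption 3 holds with `ω = 1` and `c = δ/2`. -/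
theorem balanced_design_implies_assumption3
    {n k : ℕ} (hn : 0 < n) (hk : 0 < k)
    (Z : Matrix (Fin n) (Fin k) ℝ)
    (hinv : IsUnit (Zᵀ * Z).det)
    (hrank : Z.rank = k)
    (δ : ℝ) (hδ0 : 0 < δ) (hδ1 : δ < 1)
    (hdiag : ∀ i : Fin n, (Z * (Zᵀ * Z)⁻¹ * Zᵀ) i i ≤ 1 - δ) :
    (∃ γ₀ : ℝ, 0 ≤ γ₀ ∧
      (δ / 2) * (k : ℝ) ≤
        ∑ i : Fin n, ∑ j ∈ Finset.univ.erase i, (ridgeP Z γ₀ i j) ^ 2) ∧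
    (∀ γs : ℝ, 0 ≤ γs →
      (∀ γ : ℝ, 0 ≤ γ →
        (∑ i : Fin n, ∑ j ∈ Finset.univ.erase i, (ridgeP Z γ i j) ^ 2) ≤
          ∑ i : Fin n, ∑ j ∈ Finset.univ.erase i, (ridgeP Z γs i j) ^ 2) →
      (δ / 2) * (k : ℝ) ≤
        ∑ i : Fin n, ∑ j ∈ Finset.univ.erase i, (ridgeP Z γs i j) ^ 2) :=
  balanced_design_implies_assumption3_general Z hinv δ hδ0 hdiag
end

section
/- For every subset I₂ of {1,…,n}², the sum ∑_{(i,j)∈I₂} (P^γ_{ij})⁴ is at most r, where r = rank(Z). -/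
/-!
Write `G = ZᵀZ + γ I` and `P = Z G⁻¹ Zᵀ`. Substituting `ZᵀZ = G - γ I` in the middle of `P²` gives
`P - P² = γ (Z G⁻¹)(Z G⁻¹)ᵀ ⪰ 0`. For a symmetric `P` with `P² ⪯ P`, the diagonal of `P - P²`
gives `∑_b P_ab² ≤ P_aa ≤ 1`; hence `P_ab⁴ ≤ P_ab²` and `∑_{a,b} P_ab² ≤ tr P`. Finally the
eigenvalues of `P` lie in `[0, 1]`, so `tr P ≤ rank P ≤ rank Z`.
-/

open Matrix Finset

namespace Matrix
variable {n : Type*} [Fintype n] {A : Matrix n n ℝ}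

lemma IsHermitian.eigenvalues_mem_Icc_of_posSemidef_sub_mul_self [DecidableEq n]
    (hA : A.IsHermitian) (h : (A - A * A).PosSemidef) (i : n) :
    hA.eigenvalues i ∈ Set.Icc (0 : ℝ) 1 := by
  set v : n → ℝ := ⇑(hA.eigenvectorBasis i)
  set t := hA.eigenvalues i
  have hv : v ⬝ᵥ v = 1 := by
    have hnorm : ‖hA.eigenvectorBasis i‖ = 1 := hA.eigenvectorBasis.orthonormal.1 i
    have hinner := real_inner_self_eq_norm_sq (hA.eigenvectorBasis i)
    rwa [hnorm, one_pow, EuclideanSpace.inner_eq_star_dotProduct, star_trivial] at hinner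
  have hAv : A *ᵥ v = t • v := hA.mulVec_eigenvectorBasis i
  have ht : 0 ≤ t - t ^ 2 := by
    have := h.dotProduct_mulVec_nonneg v
    rwa [star_trivial, sub_mulVec, ← mulVec_mulVec, hAv, mulVec_smul, hAv, smul_smul,
      dotProduct_sub, dotProduct_smul, dotProduct_smul, hv, smul_eq_mul, smul_eq_mul, ← sq,
      mul_one, mul_one] at this
  constructor <;> nlinarith

lemma IsHermitian.trace_le_rank_of_posSemidef_sub_mul_self [DecidableEq n]
    (hA : A.IsHermitian) (h : (A - A * A).PosSemidef) : A.trace ≤ A.rank := by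
  rw [hA.trace_eq_sum_eigenvalues, hA.rank_eq_card_non_zero_eigs, Fintype.card_subtype,
    ← sum_boole]
  refine sum_le_sum fun i _ => ?_
  have hi := hA.eigenvalues_mem_Icc_of_posSemidef_sub_mul_self h i
  split_ifs with h0
  · exact hi.2
  · simp [not_not.mp h0]

lemma sum_sq_le_diag_of_posSemidef_sub_mul_self (hA : A.IsHermitian)
    (h : (A - A * A).PosSemidef) (a : n) : ∑ b, A a b ^ 2 ≤ A a a := by
  have := h.diag_nonneg (i := a)
  rw [sub_apply, mul_apply] at this
  have hsymm : ∀ b, A a b * A b a = A a b ^ 2 := fun b => by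
    rw [← hA.apply a b, star_trivial, sq]
  simp only [hsymm] at this
  linarith

lemma sq_le_one_of_posSemidef_sub_mul_self (hA : A.IsHermitian)
    (h : (A - A * A).PosSemidef) (a b : n) : A a b ^ 2 ≤ 1 := by
  have hrow := sum_sq_le_diag_of_posSemidef_sub_mul_self hA h a
  have hab : A a b ^ 2 ≤ A a a :=
    (single_le_sum (fun c _ => sq_nonneg (A a c)) (mem_univ b)).trans hrow
  have haa : A a a ^ 2 ≤ A a a :=
    (single_le_sum (fun c _ => sq_nonneg (A a c)) (mem_univ a)).trans hrow
  nlinarith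

lemma sum_sum_pow_four_le_rank_of_posSemidef_sub_mul_self [DecidableEq n]
    (hA : A.IsHermitian) (h : (A - A * A).PosSemidef) : ∑ a, ∑ b, A a b ^ 4 ≤ A.rank :=
  calc ∑ a, ∑ b, A a b ^ 4 ≤ ∑ a, ∑ b, A a b ^ 2 := by
        refine sum_le_sum fun a _ => sum_le_sum fun b _ => ?_
        have := sq_le_one_of_posSemidef_sub_mul_self hA h a b
        nlinarith [sq_nonneg (A a b)]
    _ ≤ ∑ a, A a a := sum_le_sum fun a _ => sum_sq_le_diag_of_posSemidef_sub_mul_self hA h a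
    _ ≤ A.rank := hA.trace_le_rank_of_posSemidef_sub_mul_self h

lemma mulVec_injective_of_rank_eq_card {m K : Type*} [Field K] (Z : Matrix m n K)
    (h : Z.rank = Fintype.card n) :
    Function.Injective Z.mulVec := by
  have := LinearMap.finrank_range_add_finrank_ker Z.mulVecLin
  rw [← rank, h, Module.finrank_fintype_fun_eq_card, add_eq_left,
    Submodule.finrank_eq_zero] at this
  exact LinearMap.ker_eq_bot.mp this

lemma posDef_transpose_mul_self_add_smul_one {m : Type*} [Fintype m] [DecidableEq n]
    {Z : Matrix m n ℝ} {γ : ℝ} (hγ0 : 0 ≤ γ)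
    (hγpos : Z.rank < Fintype.card n → 0 < γ) : (Zᵀ * Z + γ • (1 : Matrix n n ℝ)).PosDef := by
  rcases hγ0.lt_or_eq with hγ | rfl
  · simpa using PosDef.posSemidef_add (posSemidef_conjTranspose_mul_self Z) (PosDef.one.smul hγ)
  · have hrank : Z.rank = Fintype.card n :=
      (rank_le_card_width Z).antisymm (not_lt.mp fun h => (hγpos h).false)
    simpa using PosDef.conjTranspose_mul_self Z (mulVec_injective_of_rank_eq_card Z hrank)

end Matrix

section ridgeP
variable {n k : ℕ} (Z : Matrix (Fin n) (Fin k) ℝ) (γ : ℝ)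

lemma transpose_inv_transpose_mul_self_add_smul_one :
    (Zᵀ * Z + γ • (1 : Matrix (Fin k) (Fin k) ℝ))⁻¹ᵀ = (Zᵀ * Z + γ • 1)⁻¹ := by
  rw [transpose_nonsing_inv, transpose_add, transpose_mul, transpose_transpose, transpose_smul,
    transpose_one]

lemma ridgeP_isHermitian : (ridgeP Z γ).IsHermitian := by
  rw [IsHermitian, conjTranspose_eq_transpose_of_trivial, ridgeP, transpose_mul, transpose_mul,
    transpose_transpose, transpose_inv_transpose_mul_self_add_smul_one, Matrix.mul_assoc]

lemma ridgeP_sub_mul_self (h : IsUnit (Zᵀ * Z + γ • (1 : Matrix (Fin k) (Fin k) ℝ)).det) :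
    ridgeP Z γ - ridgeP Z γ * ridgeP Z γ =
      γ • (Z * (Zᵀ * Z + γ • 1)⁻¹ * (Z * (Zᵀ * Z + γ • 1)⁻¹)ᵀ) := by
  set M := (Zᵀ * Z + γ • (1 : Matrix (Fin k) (Fin k) ℝ))⁻¹
  have hgram : Zᵀ * Z = (Zᵀ * Z + γ • 1) - γ • 1 := (add_sub_cancel_right _ _).symm
  have hMG : M * (Zᵀ * Z + γ • 1) = 1 := nonsing_inv_mul _ h
  calc ridgeP Z γ - ridgeP Z γ * ridgeP Z γ
      = Z * M * Zᵀ - Z * (M * (Zᵀ * Z)) * M * Zᵀ := by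
        simp only [ridgeP, M, Matrix.mul_assoc]
    _ = γ • (Z * M * (Z * M)ᵀ) := by
        rw [hgram, Matrix.mul_sub, hMG, transpose_mul,
          transpose_inv_transpose_mul_self_add_smul_one]
        simp only [Matrix.mul_smul, Matrix.mul_one, Matrix.sub_mul, Matrix.mul_sub,
          Matrix.smul_mul, M, Matrix.mul_assoc, sub_sub_cancel]

lemma posSemidef_ridgeP_sub_mul_self (hγ : 0 ≤ γ)
    (h : IsUnit (Zᵀ * Z + γ • (1 : Matrix (Fin k) (Fin k) ℝ)).det) :
    (ridgeP Z γ - ridgeP Z γ * ridgeP Z γ).PosSemidef := by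
  rw [ridgeP_sub_mul_self Z γ h]
  have := (posSemidef_self_mul_conjTranspose (Z * (Zᵀ * Z + γ • 1)⁻¹)).smul hγ
  rwa [conjTranspose_eq_transpose_of_trivial] at this

lemma rank_ridgeP_le : (ridgeP Z γ).rank ≤ Z.rank :=
  (rank_mul_le_left _ _).trans (rank_mul_le_left _ _)

end ridgeP

theorem ridgeP_fourth_power_sum_le_rank_general
    {n k : ℕ}
    (Z : Matrix (Fin n) (Fin k) ℝ)
    (γ : ℝ) (hγ0 : 0 ≤ γ) (hγpos : Z.rank < k → 0 < γ)
    (I₂ : Finset (Fin n × Fin n)) :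
    ∑ p ∈ I₂, (ridgeP Z γ p.1 p.2) ^ 4 ≤ (Z.rank : ℝ) := by
  have hG := posDef_transpose_mul_self_add_smul_one (Z := Z) hγ0 (by simpa using hγpos)
  have hP := posSemidef_ridgeP_sub_mul_self Z γ hγ0 ((isUnit_iff_isUnit_det _).mp hG.isUnit)
  calc ∑ p ∈ I₂, ridgeP Z γ p.1 p.2 ^ 4
      ≤ ∑ p : Fin n × Fin n, ridgeP Z γ p.1 p.2 ^ 4 :=
        sum_le_sum_of_subset_of_nonneg (subset_univ I₂) fun p _ _ => by positivity
    _ = ∑ a, ∑ b, ridgeP Z γ a b ^ 4 := Fintype.sum_prod_type _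
    _ ≤ (ridgeP Z γ).rank :=
        sum_sum_pow_four_le_rank_of_posSemidef_sub_mul_self (ridgeP_isHermitian Z γ) hP
    _ ≤ Z.rank := by exact_mod_cast rank_ridgeP_le Z γ

/-- For every subset `I₂` of `{1,…,n}²`, `∑_{(i,j) ∈ I₂} (P^γ_{ij})⁴ ≤ rank(Z)`. -/
theorem ridgeP_fourth_power_sum_le_rank
    {n k : ℕ} (hn : 0 < n) (hk : 0 < k)
    (Z : Matrix (Fin n) (Fin k) ℝ) (hr : 0 < Z.rank)
    (γ : ℝ) (hγ0 : 0 ≤ γ) (hγpos : Z.rank < k → 0 < γ)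
    (I₂ : Finset (Fin n × Fin n)) :
    ∑ p ∈ I₂, (ridgeP Z γ p.1 p.2) ^ 4 ≤ (Z.rank : ℝ) :=
  ridgeP_fourth_power_sum_le_rank_general Z γ hγ0 hγpos I₂
end

section
/- Suppose ZᵀZ is invertible (rank(Z) = k) and let P := Z(ZᵀZ)^{-1}Zᵀ. Then for every γ ≥ 0, ∑_{i=1}^n ∑_{j≠i} (P^γ_{ij})² ≥ ∑_{i=1}^n ∑_{j≠i} (P_{ij})² − 2√k · ‖P − P^γ‖_F, where ‖·‖_F denotes the Frobenius norm. -/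
/-!
With `S = ZᵀZ` and `T = (S + γI)⁻¹` we have `P = P⁰`, `P^γ = Z T Zᵀ` and `TS = I - γT`, so
`‖P^γ‖_F² = tr((TS)²) = k - γ (tr T + tr (TST)) ≤ k` because `T` and `TST` are positive
semidefinite. Taking off-diagonal parts `X°` does not increase the Frobenius norm, hence
`‖P°‖² - ‖(P^γ)°‖² ≤ ‖P° - (P^γ)°‖ (‖P°‖ + ‖(P^γ)°‖) ≤ ‖P - P^γ‖_F · 2√k`.
-/

open Matrix Finset

/-- The Frobenius norm `‖A‖_F = √(tr(AᵀA))`. -/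
noncomputable def frobNorm {n : ℕ} (A : Matrix (Fin n) (Fin n) ℝ) : ℝ :=
  Real.sqrt (Matrix.trace (Aᵀ * A))

open scoped Matrix.Norms.Frobenius

theorem norm_sq_sub_norm_sq_le {E : Type*} [SeminormedAddCommGroup E] (x y : E) :
    ‖x‖ ^ 2 - ‖y‖ ^ 2 ≤ ‖x - y‖ * (‖x‖ + ‖y‖) := by
  rw [sq_sub_sq, mul_comm]
  exact mul_le_mul_of_nonneg_right (norm_sub_norm_le x y) (by positivity)

namespace Matrix

variable {m n α : Type*}

def offDiag [DecidableEq n] [Zero α] (A : Matrix n n α) : Matrix n n α :=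
  of fun i j => if i = j then 0 else A i j

theorem offDiag_sub [DecidableEq n] [AddGroup α] (A B : Matrix n n α) :
    offDiag (A - B) = offDiag A - offDiag B := by
  ext i j
  by_cases h : i = j <;> simp [offDiag, h]

theorem frobenius_norm_sq_eq_sum [Fintype m] [Fintype n] (A : Matrix m n ℝ) :
    ‖A‖ ^ 2 = ∑ i, ∑ j, A i j ^ 2 := by
  rw [frobenius_norm_def, ← Real.sqrt_eq_rpow, Real.sq_sqrt (by positivity)]
  simp

theorem trace_transpose_mul_self_eq_frobenius_norm_sq [Fintype m] [Fintype n]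
    (A : Matrix m n ℝ) : trace (Aᵀ * A) = ‖A‖ ^ 2 := by
  rw [frobenius_norm_sq_eq_sum, trace, sum_comm]
  simp [mul_apply, sq]

theorem frobenius_norm_offDiag_le [Fintype n] [DecidableEq n] [SeminormedAddCommGroup α]
    (A : Matrix n n α) : ‖offDiag A‖ ≤ ‖A‖ := by
  simp only [frobenius_norm_def]
  gcongr with i _ j _
  by_cases h : i = j <;> simp [offDiag, h]

theorem frobenius_norm_offDiag_sq [Fintype n] [DecidableEq n] (A : Matrix n n ℝ) :
    ‖offDiag A‖ ^ 2 = ∑ i, ∑ j ∈ univ.erase i, A i j ^ 2 := by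
  rw [frobenius_norm_sq_eq_sum]
  refine sum_congr rfl fun i _ => ?_
  rw [← filter_ne', sum_filter]
  refine sum_congr rfl fun j _ => ?_
  by_cases h : i = j <;> simp [offDiag, h, Ne.symm]

variable {k : Type*} [Fintype m] [Fintype k]

theorem posSemidef_transpose_mul_self (Z : Matrix m k ℝ) : (Zᵀ * Z).PosSemidef := by
  simpa using posSemidef_conjTranspose_mul_self Z

variable [DecidableEq k] {Z : Matrix m k ℝ} {γ : ℝ}

theorem posDef_transpose_mul_self_add_smul_one_s14 (hZ : IsUnit (Zᵀ * Z).det) (hγ : 0 ≤ γ) :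
    (Zᵀ * Z + γ • 1).PosDef :=
  ((posSemidef_transpose_mul_self Z).posDef_iff_isUnit.mpr
    ((isUnit_iff_isUnit_det _).mpr hZ)).add_posSemidef (PosSemidef.one.smul hγ)

theorem trace_ridge_sq_le_card (hZ : IsUnit (Zᵀ * Z).det) (hγ : 0 ≤ γ) :
    trace ((Z * (Zᵀ * Z + γ • 1)⁻¹ * Zᵀ)ᵀ * (Z * (Zᵀ * Z + γ • 1)⁻¹ * Zᵀ)) ≤
      (Fintype.card k : ℝ) := by
  set S := Zᵀ * Z with hS
  set T := (S + γ • 1)⁻¹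
  have hM := posDef_transpose_mul_self_add_smul_one_s14 hZ hγ
  have hT : T.PosSemidef := hM.posSemidef.inv
  have hTt : Tᵀ = T := by simpa using hT.isHermitian.eq
  have hTS : T * S = 1 - γ • T := by
    have hTM : T * (S + γ • 1) = 1 := nonsing_inv_mul _ ((isUnit_iff_isUnit_det _).mp hM.isUnit)
    rw [mul_add, Matrix.mul_smul, mul_one] at hTM
    exact eq_sub_of_add_eq hTM
  have hTST : 0 ≤ trace (T * S * T) := by
    have := ((posSemidef_transpose_mul_self Z).conjTranspose_mul_mul_same T).trace_nonneg
    rwa [conjTranspose_eq_transpose_of_trivial, hTt] at this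
  have hQQ : trace ((Z * T * Zᵀ)ᵀ * (Z * T * Zᵀ)) = trace (T * S * (T * S)) := by
    rw [transpose_mul, transpose_mul, transpose_transpose, hTt]
    simp only [Matrix.mul_assoc]
    rw [trace_mul_comm Z]
    simp only [hS, Matrix.mul_assoc]
  have hsq : T * S * (T * S) = T * S - γ • (T * S * T) := by
    nth_rewrite 2 [hTS]
    rw [mul_sub, mul_one, Matrix.mul_smul]
  have htrTS : trace (T * S) = Fintype.card k - γ * trace T := by
    rw [hTS, trace_sub, trace_smul, trace_one, smul_eq_mul]
  rw [hQQ, hsq, trace_sub, trace_smul, htrTS, smul_eq_mul]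
  linarith [mul_nonneg hγ hT.trace_nonneg, mul_nonneg hγ hTST]

end Matrix

theorem frobNorm_eq_norm {n : ℕ} (A : Matrix (Fin n) (Fin n) ℝ) : frobNorm A = ‖A‖ := by
  rw [frobNorm, trace_transpose_mul_self_eq_frobenius_norm_sq, Real.sqrt_sq (norm_nonneg A)]

theorem norm_ridgeP_le_sqrt {n k : ℕ} {Z : Matrix (Fin n) (Fin k) ℝ} {γ : ℝ}
    (hZ : IsUnit (Zᵀ * Z).det) (hγ : 0 ≤ γ) : ‖ridgeP Z γ‖ ≤ Real.sqrt k := by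
  rw [← frobNorm_eq_norm, frobNorm]
  refine Real.sqrt_le_sqrt ?_
  simpa only [ridgeP, Fintype.card_fin] using trace_ridge_sq_le_card hZ hγ

theorem ridgeP_offdiag_lower_bound_general
    {n k : ℕ}
    (Z : Matrix (Fin n) (Fin k) ℝ)
    (hinv : IsUnit (Zᵀ * Z).det)
    (γ : ℝ) (hγ : 0 ≤ γ) :
    (∑ i : Fin n, ∑ j ∈ Finset.univ.erase i, ((Z * (Zᵀ * Z)⁻¹ * Zᵀ) i j) ^ 2)
        - 2 * Real.sqrt (k : ℝ) * frobNorm (Z * (Zᵀ * Z)⁻¹ * Zᵀ - ridgeP Z γ) ≤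
      ∑ i : Fin n, ∑ j ∈ Finset.univ.erase i, (ridgeP Z γ i j) ^ 2 := by
  set P := Z * (Zᵀ * Z)⁻¹ * Zᵀ
  set Q := ridgeP Z γ
  have hP : ‖P‖ ≤ Real.sqrt k := by
    simpa [ridgeP] using norm_ridgeP_le_sqrt hinv le_rfl
  have hQ : ‖Q‖ ≤ Real.sqrt k := norm_ridgeP_le_sqrt hinv hγ
  rw [← frobenius_norm_offDiag_sq, ← frobenius_norm_offDiag_sq, frobNorm_eq_norm,
    sub_le_iff_le_add']
  calc ‖offDiag P‖ ^ 2
      ≤ ‖offDiag Q‖ ^ 2 + ‖offDiag P - offDiag Q‖ * (‖offDiag P‖ + ‖offDiag Q‖) := by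
        linarith [norm_sq_sub_norm_sq_le (offDiag P) (offDiag Q)]
    _ ≤ ‖offDiag Q‖ ^ 2 + ‖P - Q‖ * (Real.sqrt k + Real.sqrt k) := by
        rw [← offDiag_sub]
        gcongr
        · exact frobenius_norm_offDiag_le _
        · exact (frobenius_norm_offDiag_le P).trans hP
        · exact (frobenius_norm_offDiag_le Q).trans hQ
    _ = 2 * Real.sqrt k * ‖P - Q‖ + ‖offDiag Q‖ ^ 2 := by ring

/-- If `ZᵀZ` is invertible (so `rank(Z) = k`) and `P = Z(ZᵀZ)⁻¹Zᵀ`, then for all `γ ≥ 0`,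
`∑_i ∑_{j ≠ i} (P^γ_{ij})² ≥ ∑_i ∑_{j ≠ i} (P_{ij})² - 2√k · ‖P - P^γ‖_F`. -/
theorem ridgeP_offdiag_lower_bound
    {n k : ℕ} (hk : 0 < k) (hkn : k ≤ n)
    (Z : Matrix (Fin n) (Fin k) ℝ)
    (hinv : IsUnit (Zᵀ * Z).det)
    (γ : ℝ) (hγ : 0 ≤ γ) :
    (∑ i : Fin n, ∑ j ∈ Finset.univ.erase i, ((Z * (Zᵀ * Z)⁻¹ * Zᵀ) i j) ^ 2)
        - 2 * Real.sqrt (k : ℝ) * frobNorm (Z * (Zᵀ * Z)⁻¹ * Zᵀ - ridgeP Z γ) ≤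
      ∑ i : Fin n, ∑ j ∈ Finset.univ.erase i, (ridgeP Z γ i j) ^ 2 :=
  ridgeP_offdiag_lower_bound_general Z hinv γ hγ
end
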